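/- A permutation of length n is sortable by a single stack if and only if it avoids the pattern 231, i.e., there are no indices i < j < k with p(k) < p(i) < p(j). -/

import Mathlib

/-- A configuration for sorting with `t` stacks in series: the remaining input,
the stacks (index `0` is the leftmost, next to the output; index `t-1` is the
rightmost, next to the input; the head of each list is the top of the stack),
and the output produced so far. -/
structure Conf where
  input : List ℕ
  stks : List (List ℕ)
  output : List ℕ
deriving DecidableEq, Repr

/-- `x` may be placed on top of a stack iff the stack is empty or `x` is smaller
than the current top (stacks are increasing from top to bottom). -/
def canPush (x : ℕ) : List ℕ → Bool
  | [] => true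
  | y :: _ => decide (x < y)

/-- Moves, ordered left to right: `0` = pop the leftmost stack to the output
(legal only for the next element of the identity); `m` with `0 < m < t` = move the
top of stack `m` one stack to the left; `t` = push the next input element onto the
rightmost stack. -/
def legal (t : ℕ) (c : Conf) (m : ℕ) : Bool :=
  if m = 0 then
    match c.stks.getD 0 [] with
    | x :: _ => x == c.output.length + 1
    | [] => false
  else if m < t then
    match c.stks.getD m [] with
    | x :: _ => canPush x (c.stks.getD (m-1) [])
    | [] => false
  else if m = t then
    match c.input with
    | x :: _ => canPush x (c.stks.getD (t-1) [])
    | [] => false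
  else false

/-- Perform move `m` on configuration `c` (with `t` stacks). -/
def applyMove (t : ℕ) (c : Conf) (m : ℕ) : Conf :=
  if m = 0 then
    match c.stks.getD 0 [] with
    | x :: s => ⟨c.input, c.stks.set 0 s, c.output ++ [x]⟩
    | [] => c
  else if m < t then
    match c.stks.getD m [] with
    | x :: s => ⟨c.input, (c.stks.set m s).set (m-1) (x :: c.stks.getD (m-1) []), c.output⟩
    | [] => c
  else
    match c.input with
    | x :: rest => ⟨rest, c.stks.set (t-1) (x :: c.stks.getD (t-1) []), c.output⟩
    | [] => c

def initConf (t : ℕ) (p : List ℕ) : Conf := ⟨p, List.replicate t [], []⟩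

/-- The fully sorted configuration: empty input and stacks, output `1,2,...,n`. -/
def finalConf (t n : ℕ) : Conf := ⟨[], List.replicate t [], List.range' 1 n⟩

/-- Run a sequence of moves, requiring each to be legal. -/
def runLegal (t : ℕ) : Conf → List ℕ → Option Conf
  | c, [] => some c
  | c, m :: ms => if legal t c m then runLegal t (applyMove t c m) ms else none

/-- `p` is sortable by `t` stacks in series by some sequence of legal moves. -/
def Sortable (t : ℕ) (p : List ℕ) : Prop :=
  ∃ ms : List ℕ, runLegal t (initConf t p) ms = some (finalConf t p.length)

/-- The leftmost legal move, if any. -/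
def leftMove (t : ℕ) (c : Conf) : Option ℕ :=
  ((List.range (t+1)).filter (fun m => legal t c m)).head?

/-- The rightmost legal move, if any. -/
def rightMove (t : ℕ) (c : Conf) : Option ℕ :=
  ((List.range (t+1)).filter (fun m => legal t c m)).getLast?

/-- One step of a greedy algorithm given by the move selector `mv`
(the configuration is unchanged if no move is legal, i.e. the algorithm fails or is done). -/
def greedyStep (mv : ℕ → Conf → Option ℕ) (t : ℕ) (c : Conf) : Conf :=
  match mv t c with
  | some m => applyMove t c m
  | none => c

/-- The greedy algorithm given by `mv` sorts `p` with `t` stacks in series. -/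
def GreedySorts (mv : ℕ → Conf → Option ℕ) (t : ℕ) (p : List ℕ) : Prop :=
  ∃ k : ℕ, (greedyStep mv t)^[k] (initConf t p) = finalConf t p.length

def LeftGreedySorts : ℕ → List ℕ → Prop := GreedySorts leftMove
def RightGreedySorts : ℕ → List ℕ → Prop := GreedySorts rightMove

/-- `p` is a permutation of `1,...,n` (as a list). -/
def IsPermOf (n : ℕ) (p : List ℕ) : Prop := p.Perm (List.range' 1 n)

/-- The position of the element `x` in configuration `c`: `0` if in the output
(furthest left), `j+1` if in stack `j`, `t+1` if still in the input (furthest right). -/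
def posOf (t : ℕ) (c : Conf) (x : ℕ) : ℕ :=
  if x ∈ c.output then 0
  else match (List.range t).find? (fun j => decide (x ∈ c.stks.getD j [])) with
    | some j => j + 1
    | none => t + 1

/-- `c` is at the `i`-th critical moment for the greedy algorithm `mv` on a
permutation of length `n`: either the chosen move is the entry of the `i`-th
element into the stacks, or the algorithm fails (no legal move, incomplete output). -/
def IsCrit (mv : ℕ → Conf → Option ℕ) (t i n : ℕ) (c : Conf) : Prop :=
  (c.input.length + i = n + 1 ∧ mv t c = some t) ∨
  (mv t c = none ∧ c.output.length < n)

/-- `c` is the configuration at the `i`-th critical moment of the greedy algorithm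
`mv` run on `p` (the first moment along the run satisfying `IsCrit`). -/
def CritConf (mv : ℕ → Conf → Option ℕ) (t i n : ℕ) (p : List ℕ) (c : Conf) : Prop :=
  ∃ k : ℕ, (greedyStep mv t)^[k] (initConf t p) = c ∧ IsCrit mv t i n c ∧
    ∀ k' < k, ¬ IsCrit mv t i n ((greedyStep mv t)^[k'] (initConf t p))

/-- No stack is empty while some stack to its right is nonempty. -/
def NoGap (t : ℕ) (c : Conf) : Prop :=
  ∀ j j' : ℕ, j < j' → j' < t → c.stks.getD j' [] ≠ [] → c.stks.getD j [] ≠ []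

/-- `r` contains `q` as a pattern. -/
def ContainsPat (r q : List ℕ) : Prop :=
  ∃ f : Fin q.length → Fin r.length, StrictMono f ∧
    ∀ a b : Fin q.length, q.get a < q.get b ↔ r.get (f a) < r.get (f b)

/-!
The configurations (input `inp`, stack `s`, output `out`) from which the identity can still be
produced are exactly those satisfying `StackInv`: the output is `1, …, k`, the stack increases
from top to bottom, the remaining input avoids 231, and no stack element `y` has, later in the
input, some `b > y` before some `c < y` (`y` would have to leave before `b` enters, but cannot
leave before `c` is output). Every legal move preserves the invariant backwards, so the initial
configuration of a sortable permutation satisfies it. Conversely, while it holds, the greedy move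
(pop if the top is `k + 1`, push otherwise) is legal and preserves it.
-/

def Avoids231 (l : List ℕ) : Prop :=
  ¬ ∃ a b c : ℕ, List.Sublist [a, b, c] l ∧ c < a ∧ a < b

def NoDescentAcross (y : ℕ) (l : List ℕ) : Prop :=
  ¬ ∃ b c : ℕ, List.Sublist [b, c] l ∧ c < y ∧ y < b

theorem avoids231_cons {a : ℕ} {l : List ℕ} :
    Avoids231 (a :: l) ↔ Avoids231 l ∧ NoDescentAcross a l := by
  constructor
  · intro h
    exact ⟨fun ⟨x, y, z, hs, hzx, hxy⟩ => h ⟨x, y, z, hs.cons a, hzx, hxy⟩,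
      fun ⟨b, c, hs, hca, hab⟩ => h ⟨a, b, c, hs.cons_cons a, hca, hab⟩⟩
  · rintro ⟨hl, ha⟩ ⟨x, y, z, hs, hzx, hxy⟩
    rcases List.sublist_cons_iff.mp hs with hs | ⟨r, hr, hs⟩
    · exact hl ⟨x, y, z, hs, hzx, hxy⟩
    · obtain ⟨rfl, rfl⟩ := List.cons_eq_cons.mp hr
      exact ha ⟨y, z, hs, hzx, hxy⟩

theorem noDescentAcross_cons {y x : ℕ} {l : List ℕ} :
    NoDescentAcross y (x :: l) ↔ NoDescentAcross y l ∧ (y < x → ∀ c ∈ l, y ≤ c) := by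
  constructor
  · intro h
    refine ⟨fun ⟨b, c, hs, hcy, hyb⟩ => h ⟨b, c, hs.cons x, hcy, hyb⟩, fun hyx c hc => ?_⟩
    by_contra! hcy
    exact h ⟨x, c, (List.singleton_sublist.mpr hc).cons_cons x, hcy, hyx⟩
  · rintro ⟨hl, hx⟩ ⟨b, c, hs, hcy, hyb⟩
    rcases List.sublist_cons_iff.mp hs with hs | ⟨r, hr, hs⟩
    · exact hl ⟨b, c, hs, hcy, hyb⟩
    · obtain ⟨rfl, rfl⟩ := List.cons_eq_cons.mp hr
      exact absurd (hx hyb c (List.singleton_sublist.mp hs)) (by omega)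

theorem noDescentAcross_of_forall_le {y : ℕ} {l : List ℕ} (h : ∀ c ∈ l, y ≤ c) :
    NoDescentAcross y l := by
  rintro ⟨b, c, hbc, hcy, -⟩
  exact absurd (h c (hbc.subset (by simp))) (by omega)

theorem avoids231_iff_getD (l : List ℕ) :
    Avoids231 l ↔ ¬ ∃ i j k : ℕ, i < j ∧ j < k ∧ k < l.length ∧
      l.getD k 0 < l.getD i 0 ∧ l.getD i 0 < l.getD j 0 := by
  refine not_congr ⟨?_, ?_⟩
  · rintro ⟨a, b, c, hs, hca, hab⟩
    obtain ⟨is, heq, hpw⟩ := List.sublist_eq_map_getElem hs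
    match is, heq with
    | [i, j, k], heq =>
      simp only [List.map_cons, List.map_nil, List.cons.injEq, Fin.getElem_fin] at heq
      simp only [List.pairwise_cons, List.mem_cons, List.not_mem_nil, Fin.lt_def] at hpw
      obtain ⟨ha, hb, hc, -⟩ := heq
      refine ⟨i, j, k, hpw.1 j (by simp), hpw.2.1 k (by simp), k.isLt, ?_⟩
      rw [List.getD_eq_getElem _ _ i.isLt, List.getD_eq_getElem _ _ j.isLt,
        List.getD_eq_getElem _ _ k.isLt]
      omega
  · rintro ⟨i, j, k, hij, hjk, hk, hki, hij'⟩
    have hi : i < l.length := by omega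
    have hj : j < l.length := by omega
    refine ⟨l[i], l[j], l[k], ?_, ?_⟩
    · simpa using List.map_getElem_sublist (l := l)
        (is := [⟨i, hi⟩, ⟨j, hj⟩, ⟨k, hk⟩]) (by simp [hij, hjk, hij.trans hjk])
    · simp only [List.getD_eq_getElem _ _ hi, List.getD_eq_getElem _ _ hj,
        List.getD_eq_getElem _ _ hk] at hki hij'
      exact ⟨hki, hij'⟩

theorem runLegal_cons_eq_some {t m : ℕ} {c c' : Conf} {ms : List ℕ} :
    runLegal t c (m :: ms) = some c' ↔
      legal t c m = true ∧ runLegal t (applyMove t c m) ms = some c' := by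
  by_cases hl : legal t c m <;> simp [runLegal, hl]

theorem legal_one_eq_true {inp s out : List ℕ} {m : ℕ} :
    legal 1 ⟨inp, [s], out⟩ m = true ↔
      (m = 0 ∧ ∃ s', s = (out.length + 1) :: s') ∨
        (m = 1 ∧ ∃ x rest, inp = x :: rest ∧ canPush x s = true) := by
  rcases s with _ | ⟨y, s⟩ <;> rcases inp with _ | ⟨x, rest⟩ <;>
    rcases m with _ | _ | m <;> simp [legal]

structure StackInv (n : ℕ) (inp s out : List ℕ) : Prop where
  output_eq : out = List.range' 1 out.length
  perm : (out ++ s ++ inp).Perm (List.range' 1 n)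
  sorted : s.Pairwise (· < ·)
  input_avoids : Avoids231 inp
  noDescent : ∀ y ∈ s, NoDescentAcross y inp

namespace StackInv

variable {n : ℕ} {inp s out : List ℕ}

theorem length_eq (h : StackInv n inp s out) : out.length + s.length + inp.length = n := by
  simpa [Nat.add_assoc] using h.perm.length_eq

theorem nodup (h : StackInv n inp s out) : (out ++ (s ++ inp)).Nodup := by
  rw [← List.append_assoc]
  exact h.perm.nodup_iff.mpr List.nodup_range'

theorem length_lt_of_mem (h : StackInv n inp s out) {y : ℕ} (hy : y ∈ s ++ inp) :
    out.length < y := by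
  have hy1 : 1 ≤ y := (List.mem_range'_1.mp (h.perm.subset (by rw [List.append_assoc]; exact List.mem_append_right out hy))).1
  have hyout : y ∉ out := fun hyo => List.disjoint_of_nodup_append h.nodup hyo hy
  rw [h.output_eq, List.mem_range'_1] at hyout
  omega

theorem succ_length_mem (h : StackInv n inp s out) (hlt : out.length < n) :
    out.length + 1 ∈ s ++ inp := by
  have hmem : out.length + 1 ∈ out ++ (s ++ inp) := by
    rw [← List.append_assoc, h.perm.mem_iff, List.mem_range'_1]
    omega
  refine (List.mem_append.mp hmem).resolve_left fun hout => ?_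
  rw [h.output_eq, List.mem_range'_1, List.length_range'] at hout
  omega

theorem final (n : ℕ) : StackInv n [] [] (List.range' 1 n) where
  output_eq := by simp
  perm := by simp
  sorted := List.Pairwise.nil
  input_avoids := by simp [Avoids231]
  noDescent := by simp

theorem of_pop (h : StackInv n inp s (out ++ [out.length + 1])) :
    StackInv n inp ((out.length + 1) :: s) out where
  output_eq := by
    have := h.output_eq
    rw [List.length_append, List.length_singleton, List.range'_concat] at this
    exact (List.append_inj' this rfl).1
  perm := by simpa using h.perm
  sorted := List.pairwise_cons.mpr ⟨fun y hy => by
    simpa using h.length_lt_of_mem (List.mem_append_left inp hy), h.sorted⟩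
  input_avoids := h.input_avoids
  noDescent := by
    refine List.forall_mem_cons.mpr ⟨noDescentAcross_of_forall_le fun c hc => ?_, h.noDescent⟩
    simpa using (h.length_lt_of_mem (List.mem_append_right s hc)).le

theorem of_push {x : ℕ} {rest : List ℕ} (h : StackInv n rest (x :: s) out) :
    StackInv n (x :: rest) s out where
  output_eq := h.output_eq
  perm := List.Perm.trans (by simpa using List.perm_middle.append_left out) h.perm
  sorted := (List.pairwise_cons.mp h.sorted).2
  input_avoids := avoids231_cons.mpr ⟨h.input_avoids, h.noDescent x (List.mem_cons_self ..)⟩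
  noDescent y hy := noDescentAcross_cons.mpr ⟨h.noDescent y (List.mem_cons_of_mem x hy),
    fun hyx => absurd ((List.pairwise_cons.mp h.sorted).1 y hy) (by omega)⟩

theorem of_runLegal {ms : List ℕ}
    (h : runLegal 1 ⟨inp, [s], out⟩ ms = some (finalConf 1 n)) : StackInv n inp s out := by
  induction ms generalizing inp s out with
  | nil =>
    obtain ⟨rfl, rfl, rfl⟩ : inp = [] ∧ s = [] ∧ out = List.range' 1 n := by
      simpa [runLegal, finalConf] using h
    exact final n
  | cons m ms ih =>
    obtain ⟨hl, hrun⟩ := runLegal_cons_eq_some.mp h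
    rcases legal_one_eq_true.mp hl with ⟨rfl, s', rfl⟩ | ⟨rfl, x, rest, rfl, -⟩
    · exact (ih hrun).of_pop
    · exact (ih hrun).of_push

theorem pop (h : StackInv n inp ((out.length + 1) :: s) out) :
    StackInv n inp s (out ++ [out.length + 1]) where
  output_eq := by
    rw [List.length_append, List.length_singleton, List.range'_concat, ← h.output_eq]
    simp [Nat.add_comm]
  perm := by simpa using h.perm
  sorted := (List.pairwise_cons.mp h.sorted).2
  input_avoids := h.input_avoids
  noDescent y hy := h.noDescent y (List.mem_cons_of_mem _ hy)

theorem push {x : ℕ} {rest : List ℕ} (h : StackInv n (x :: rest) s out)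
    (hx : canPush x s = true) : StackInv n rest (x :: s) out where
  output_eq := h.output_eq
  perm := List.Perm.trans (by simpa using (List.perm_middle.append_left out).symm) h.perm
  sorted := by
    refine List.pairwise_cons.mpr ⟨fun y hy => ?_, h.sorted⟩
    rcases s with _ | ⟨z, s⟩
    · simp at hy
    · have hxz : x < z := by simpa [canPush] using hx
      rcases List.mem_cons.mp hy with rfl | hy
      · exact hxz
      · exact hxz.trans ((List.pairwise_cons.mp h.sorted).1 y hy)
  input_avoids := (avoids231_cons.mp h.input_avoids).1
  noDescent := List.forall_mem_cons.mpr ⟨(avoids231_cons.mp h.input_avoids).2,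
    fun y hy => (noDescentAcross_cons.mp (h.noDescent y hy)).1⟩

theorem succ_length_mem_input {y : ℕ} (h : StackInv n inp (y :: s) out)
    (hy : y ≠ out.length + 1) : out.length + 1 ∈ inp ∧ out.length + 1 < y := by
  have hlt : out.length + 1 < y := by
    have := h.length_lt_of_mem (y := y) (by simp)
    omega
  refine ⟨?_, hlt⟩
  have hmem := h.succ_length_mem (by have := h.length_eq; rw [List.length_cons] at this; omega)
  rcases List.mem_append.mp hmem with hs | hinp
  · rcases List.mem_cons.mp hs with heq | hs
    · omega
    · exact absurd ((List.pairwise_cons.mp h.sorted).1 _ hs) (by omega)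
  · exact hinp

theorem canPush_of_not_pop {x : ℕ} {rest : List ℕ} (h : StackInv n (x :: rest) s out)
    (hpop : ¬ ∃ s', s = (out.length + 1) :: s') : canPush x s = true := by
  rcases s with _ | ⟨y, s⟩
  · rfl
  have hy : y ≠ out.length + 1 := fun hy => hpop ⟨s, by rw [hy]⟩
  obtain ⟨hmem, hlt⟩ := h.succ_length_mem_input hy
  have hxy : x ≠ y := fun hxy =>
    List.disjoint_of_nodup_append h.nodup.of_append_right (List.mem_cons_self ..)
      (hxy ▸ List.mem_cons_self ..)
  simp only [canPush, decide_eq_true_eq]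
  -- otherwise `x > y > out.length + 1`, and `out.length + 1` comes after `x`: a descent across `y`
  by_contra! hyx
  have hsucc : out.length + 1 ∈ rest :=
    (List.mem_cons.mp hmem).resolve_left (by omega)
  have := (noDescentAcross_cons.mp (h.noDescent y (List.mem_cons_self ..))).2 (by omega) _ hsucc
  omega

end StackInv

theorem StackInv.exists_runLegal {n : ℕ} {inp s out : List ℕ} (h : StackInv n inp s out) :
    ∃ ms, runLegal 1 ⟨inp, [s], out⟩ ms = some (finalConf 1 n) := by
  by_cases hpop : ∃ s', s = (out.length + 1) :: s'
  · obtain ⟨s', rfl⟩ := hpop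
    obtain ⟨ms, hms⟩ := StackInv.exists_runLegal h.pop
    exact ⟨0 :: ms, runLegal_cons_eq_some.mpr
      ⟨legal_one_eq_true.mpr (.inl ⟨rfl, s', rfl⟩), hms⟩⟩
  match inp, s, h, hpop with
  | [], [], h, _ =>
    have hout : out = List.range' 1 n := by
      rw [h.output_eq, show out.length = n by simpa using h.length_eq]
    exact ⟨[], by rw [hout]; rfl⟩
  | [], y :: s, h, hpop =>
    exact absurd (h.succ_length_mem_input fun hy => hpop ⟨s, by rw [hy]⟩).1 List.not_mem_nil
  | x :: rest, s, h, hpop =>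
    have hx := h.canPush_of_not_pop hpop
    obtain ⟨ms, hms⟩ := StackInv.exists_runLegal (h.push hx)
    exact ⟨1 :: ms, runLegal_cons_eq_some.mpr
      ⟨legal_one_eq_true.mpr (.inr ⟨rfl, x, rest, rfl, hx⟩), hms⟩⟩
termination_by 2 * inp.length + s.length

/-- A permutation of length `n` is sortable by a single stack iff it avoids `231`. -/
theorem stmt1 (n : ℕ) (p : List ℕ) (hp : IsPermOf n p) :
    Sortable 1 p ↔
      ¬ ∃ i j k : ℕ, i < j ∧ j < k ∧ k < p.length ∧
        p.getD k 0 < p.getD i 0 ∧ p.getD i 0 < p.getD j 0 := by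
  rw [← avoids231_iff_getD]
  constructor
  · rintro ⟨ms, hms⟩
    exact (StackInv.of_runLegal hms).input_avoids
  · intro hp231
    have hinit : StackInv n p [] [] :=
      ⟨rfl, by simpa [IsPermOf] using hp, List.Pairwise.nil, hp231, by simp⟩
    obtain ⟨ms, hms⟩ := hinit.exists_runLegal
    have hlen : p.length = n := by simpa using hp.length_eq
    exact ⟨ms, hlen ▸ hms⟩
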